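/- For t > 0, d >= 1 and exponents 1 <= p, q <= \infty, the Wiener amalgam norm of the twisted heat propagator p_t(z) = (16\pi \sinh t)^{-d} e^{-\frac{1}{4}\coth(t)|z|^2} on R^{2d} satisfies ||p_t||_{W^{p,q}} <= C e^{-t d} (1 + \coth t)^{d/p} (1 + \tanh t)^{d/q} for a constant C depending only on d, p, q. -/

import Mathlib

open MeasureTheory Real

noncomputable section

/-- Euclidean dot product on `ℝ^d`. -/
def dotp {d : ℕ} (x y : Fin d → ℝ) : ℝ := ∑ j, x j * y j

/-- The standard symplectic form `σ(z,w) = Jz·w` on `ℝ^{2d} = ℝ^d × ℝ^d`. -/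
def sympForm {d : ℕ} (z w : (Fin d → ℝ) × (Fin d → ℝ)) : ℝ :=
  dotp z.2 w.1 - dotp z.1 w.2

/-- Squared Euclidean norm `|z|²` on `ℝ^{2d} = ℝ^d × ℝ^d`. -/
def nsq {d : ℕ} (z : (Fin d → ℝ) × (Fin d → ℝ)) : ℝ :=
  ∑ j, z.1 j ^ 2 + ∑ j, z.2 j ^ 2

/-- Symplectic Gabor transform
`V_g f(z,ζ) = π^{-d} ∫ e^{-2iσ(ζ,w)} f(w) conj(g(w-z)) dw`. -/
def sympGabor {d : ℕ} (g f : (Fin d → ℝ) × (Fin d → ℝ) → ℂ)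
    (z ζ : (Fin d → ℝ) × (Fin d → ℝ)) : ℂ :=
  (((π : ℝ) ^ d)⁻¹ : ℝ) *
    ∫ w : (Fin d → ℝ) × (Fin d → ℝ),
      Complex.exp (-2 * Complex.I * (sympForm ζ w : ℝ)) * f w *
        (starRingEnd ℂ) (g (w - z))

/-- The twisted heat propagator `p_t(z) = (16π sinh t)^{-d} e^{-coth(t)|z|²/4}`. -/
def twistedHeatProp (d : ℕ) (t : ℝ) (z : (Fin d → ℝ) × (Fin d → ℝ)) : ℂ :=
  (((16 * π * Real.sinh t : ℝ) ^ d)⁻¹ *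
      Real.exp (-(1 / 4) * (Real.cosh t / Real.sinh t) * nsq z) : ℝ)

lemma abs_int {d : ℕ} (b : ℝ) (hb : 0 < b) (u v : Fin d → ℝ) :
    ‖(∫ x : Fin d → ℝ, Complex.exp (-(b:ℂ) * ∑ j, (x j : ℂ)^2
        + ∑ j, (((2 * u j : ℝ) : ℂ) + ((v j : ℝ) : ℂ) * Complex.I) * (x j : ℂ)))‖
      = (π/b) ^ ((d:ℝ)/2) * Real.exp ((4 * ∑ j, (u j)^2 - ∑ j, (v j)^2)/(4*b)) := by
  rw [GaussianFourier.integral_cexp_neg_mul_sum_add (by simpa using hb)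
    (fun j => (((2 * u j : ℝ) : ℂ) + ((v j : ℝ) : ℂ) * Complex.I))]
  rw [norm_mul, Complex.norm_exp]
  congr 1
  · rw [show ((π:ℂ)/b) = ((π/b : ℝ) : ℂ) by push_cast; ring,
      Complex.norm_cpow_eq_rpow_re_of_pos (by positivity)]
    norm_num [Fintype.card_fin]
  · congr 1
    have : ∀ j : Fin d, ((((2 * u j : ℝ) : ℂ) + ((v j : ℝ) : ℂ) * Complex.I)^2).re
        = 4 * (u j)^2 - (v j)^2 := by
      intro j
      simp [pow_two, Complex.add_re, Complex.mul_re, Complex.mul_im]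
      ring
    rw [show ((4:ℂ) * b) = ((4*b : ℝ):ℂ) by push_cast; ring, Complex.div_ofReal_re,
      Complex.re_sum]
    simp_rw [this]
    rw [Finset.sum_sub_distrib, ← Finset.mul_sum]

lemma exp_identity {d : ℕ} (a : ℝ) (z ζ w : (Fin d → ℝ) × (Fin d → ℝ)) :
    (-2*Complex.I*((sympForm ζ w : ℝ):ℂ)) + ((-a * nsq w : ℝ):ℂ) + ((-nsq (w-z) : ℝ):ℂ)
      = ((-nsq z : ℝ):ℂ)
        + ((-(((a+1):ℝ):ℂ) * ∑ j, (w.1 j:ℂ)^2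
            + ∑ j, (((2*z.1 j:ℝ):ℂ) + ((-2*ζ.2 j:ℝ):ℂ)*Complex.I) * (w.1 j:ℂ))
          + (-(((a+1):ℝ):ℂ) * ∑ j, (w.2 j:ℂ)^2
            + ∑ j, (((2*z.2 j:ℝ):ℂ) + ((2*ζ.1 j:ℝ):ℂ)*Complex.I) * (w.2 j:ℂ))) := by
  simp only [sympForm, dotp, nsq, Prod.fst_sub, Prod.snd_sub, Pi.sub_apply]
  push_cast
  have e1 : ∀ (u v : Fin d → ℝ), ∑ j, ((u j:ℂ) - (v j:ℂ))^2
      = ∑ j, (u j:ℂ)^2 - 2*∑ j, (v j:ℂ)*(u j:ℂ) + ∑ j, (v j:ℂ)^2 := by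
    intro u v
    simp only [← Finset.sum_add_distrib, ← Finset.sum_sub_distrib, Finset.mul_sum]
    exact Finset.sum_congr rfl fun j _ => by ring
  have e2 : ∀ (r : ℂ) (u v c : Fin d → ℝ), ∑ j, (2*(u j:ℂ) + r*(c j:ℂ)*Complex.I) * (v j:ℂ)
      = 2*∑ j, (u j:ℂ)*(v j:ℂ) + r*Complex.I*∑ j, (c j:ℂ)*(v j:ℂ) := by
    intro r u v c
    simp only [← Finset.sum_add_distrib, Finset.mul_sum]
    refine Finset.sum_congr rfl fun j _ => by ring
  rw [e1 w.1 z.1, e1 w.2 z.2, e2 (-2) z.1 w.1 ζ.2, e2 2 z.2 w.2 ζ.1]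
  ring

lemma abs_gabor {d : ℕ} (a c₀ : ℝ) (ha : 0 < a) (hc : 0 ≤ c₀)
    (z ζ : (Fin d → ℝ) × (Fin d → ℝ)) :
    ‖(sympGabor (fun w => ((Real.exp (-nsq w) : ℝ) : ℂ))
        (fun w => ((c₀ * Real.exp (-a * nsq w) : ℝ) : ℂ)) z ζ)‖
      = c₀ * (((a+1)^d)⁻¹ : ℝ) *
          (Real.exp (-(a/(a+1)) * nsq z) * Real.exp (-(1/(a+1)) * nsq ζ)) := by
  have hb : (0:ℝ) < a + 1 := by linarith
  unfold sympGabor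
  have hfun : (fun w : (Fin d → ℝ) × (Fin d → ℝ) =>
      Complex.exp (-2 * Complex.I * (sympForm ζ w : ℝ)) *
        ((c₀ * Real.exp (-a * nsq w) : ℝ) : ℂ) *
        (starRingEnd ℂ) (((Real.exp (-nsq (w - z)) : ℝ) : ℂ)))
      = fun w => ((c₀ : ℂ) * Complex.exp ((-nsq z : ℝ):ℂ)) *
          (Complex.exp (-(((a+1):ℝ):ℂ) * ∑ j, (w.1 j:ℂ)^2
              + ∑ j, (((2*z.1 j:ℝ):ℂ) + ((-2*ζ.2 j:ℝ):ℂ)*Complex.I) * (w.1 j:ℂ)) *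
           Complex.exp (-(((a+1):ℝ):ℂ) * ∑ j, (w.2 j:ℂ)^2
              + ∑ j, (((2*z.2 j:ℝ):ℂ) + ((2*ζ.1 j:ℝ):ℂ)*Complex.I) * (w.2 j:ℂ))) := by
    funext w
    rw [Complex.conj_ofReal, Complex.ofReal_mul, Complex.ofReal_exp, Complex.ofReal_exp]
    rw [show Complex.exp (-2 * Complex.I * (sympForm ζ w : ℝ)) *
          ((c₀:ℂ) * Complex.exp ((-a * nsq w : ℝ):ℂ)) * Complex.exp ((-nsq (w-z) : ℝ):ℂ)
        = (c₀:ℂ) * Complex.exp ((-2*Complex.I*((sympForm ζ w : ℝ):ℂ))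
            + ((-a * nsq w : ℝ):ℂ) + ((-nsq (w-z) : ℝ):ℂ)) by
      rw [Complex.exp_add, Complex.exp_add]; ring]
    rw [exp_identity a z ζ w, Complex.exp_add, Complex.exp_add]
    ring
  rw [hfun]
  rw [integral_const_mul, Measure.volume_eq_prod,
    MeasureTheory.integral_prod_mul
      (f := fun x : Fin d → ℝ => Complex.exp (-(((a+1):ℝ):ℂ) * ∑ j, (x j:ℂ)^2
          + ∑ j, (((2*z.1 j:ℝ):ℂ) + ((-2*ζ.2 j:ℝ):ℂ)*Complex.I) * (x j:ℂ)))
      (g := fun x : Fin d → ℝ => Complex.exp (-(((a+1):ℝ):ℂ) * ∑ j, (x j:ℂ)^2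
          + ∑ j, (((2*z.2 j:ℝ):ℂ) + ((2*ζ.1 j:ℝ):ℂ)*Complex.I) * (x j:ℂ)))]
  rw [norm_mul, norm_mul, norm_mul, norm_mul, Complex.norm_exp, Complex.norm_real, Complex.norm_real, Real.norm_eq_abs, Real.norm_eq_abs]
  rw [abs_int (a+1) hb z.1 (fun j => -2 * ζ.2 j), abs_int (a+1) hb z.2 (fun j => 2 * ζ.1 j)]
  rw [Complex.ofReal_neg, Complex.neg_re, Complex.ofReal_re]
  have h1 : |(π ^ d)⁻¹| = (π ^ d)⁻¹ := abs_of_nonneg (by positivity)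
  have h2 : |c₀| = c₀ := abs_of_nonneg hc
  rw [h1, h2]
  have h3 : (π/(a+1)) ^ ((d:ℝ)/2) * (π/(a+1)) ^ ((d:ℝ)/2) = π^d / (a+1)^d := by
    rw [← Real.rpow_add (by positivity)]
    rw [show ((d:ℝ)/2 + (d:ℝ)/2) = (d:ℕ) by push_cast; ring, Real.rpow_natCast, div_pow]
  have hπ : (0:ℝ) < π ^ d := by positivity
  have hexp : Real.exp (-nsq z)
        * Real.exp ((4 * ∑ j, (z.1 j)^2 - ∑ j, (-2 * ζ.2 j)^2) / (4*(a+1)))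
        * Real.exp ((4 * ∑ j, (z.2 j)^2 - ∑ j, (2 * ζ.1 j)^2) / (4*(a+1)))
      = Real.exp (-(a/(a+1)) * nsq z) * Real.exp (-(1/(a+1)) * nsq ζ) := by
    rw [← Real.exp_add, ← Real.exp_add, ← Real.exp_add]
    congr 1
    have s1 : ∑ j, (-2 * ζ.2 j)^2 = 4 * ∑ j, (ζ.2 j)^2 := by
      rw [Finset.mul_sum]; exact Finset.sum_congr rfl fun j _ => by ring
    have s2 : ∑ j, (2 * ζ.1 j)^2 = 4 * ∑ j, (ζ.1 j)^2 := by
      rw [Finset.mul_sum]; exact Finset.sum_congr rfl fun j _ => by ring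
    rw [s1, s2]
    simp only [nsq]
    have hne : (a:ℝ) + 1 ≠ 0 := ne_of_gt hb
    field_simp
    ring
  calc (π ^ d)⁻¹ * (c₀ * Real.exp (-nsq z) *
        ((π/(a+1)) ^ ((d:ℝ)/2) * Real.exp ((4 * ∑ j, (z.1 j)^2 - ∑ j, (-2 * ζ.2 j)^2) / (4*(a+1))) *
         ((π/(a+1)) ^ ((d:ℝ)/2) * Real.exp ((4 * ∑ j, (z.2 j)^2 - ∑ j, (2 * ζ.1 j)^2) / (4*(a+1))))))
      = (π ^ d)⁻¹ * (π^d / (a+1)^d) * c₀ *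
        (Real.exp (-nsq z)
          * Real.exp ((4 * ∑ j, (z.1 j)^2 - ∑ j, (-2 * ζ.2 j)^2) / (4*(a+1)))
          * Real.exp ((4 * ∑ j, (z.2 j)^2 - ∑ j, (2 * ζ.1 j)^2) / (4*(a+1)))) := by
        rw [← h3]; ring
    _ = c₀ * ((a + 1) ^ d)⁻¹ * (Real.exp (-(a/(a+1)) * nsq z) * Real.exp (-(1/(a+1)) * nsq ζ)) := by
        rw [hexp]
        field_simp

lemma gauss_factor {d : ℕ} (β : ℝ) (z : (Fin d → ℝ) × (Fin d → ℝ)) :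
    Real.exp (-β * nsq z)
      = (∏ j, Real.exp (-β * (z.1 j)^2)) * ∏ j, Real.exp (-β * (z.2 j)^2) := by
  rw [← Real.exp_sum, ← Real.exp_sum, ← Real.exp_add, nsq]
  congr 1
  rw [mul_add, Finset.mul_sum, Finset.mul_sum]

lemma gauss_integrable {d : ℕ} (β : ℝ) (hβ : 0 < β) :
    Integrable (fun z : (Fin d → ℝ) × (Fin d → ℝ) => Real.exp (-β * nsq z)) := by
  have h1 : Integrable (fun x : Fin d → ℝ => ∏ j, Real.exp (-β * (x j)^2)) := by
    exact Integrable.fintype_prod (f := fun (_ : Fin d) (x : ℝ) => Real.exp (-β * x^2))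
      (fun _ => integrable_exp_neg_mul_sq hβ)
  have := h1.mul_prod h1
  rw [← Measure.volume_eq_prod] at this
  exact this.congr (ae_of_all _ fun z => (gauss_factor β z).symm)

lemma gauss_integral {d : ℕ} (β : ℝ) (hβ : 0 < β) :
    (∫ z : (Fin d → ℝ) × (Fin d → ℝ), Real.exp (-β * nsq z)) = (π/β)^d := by
  simp_rw [gauss_factor β]
  rw [Measure.volume_eq_prod, MeasureTheory.integral_prod_mul
    (f := fun x : Fin d → ℝ => ∏ j, Real.exp (-β * (x j)^2))
    (g := fun x : Fin d → ℝ => ∏ j, Real.exp (-β * (x j)^2)),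
    integral_fintype_prod_volume_eq_pow (ι := Fin d) (fun x : ℝ => Real.exp (-β * x^2)), integral_gaussian]
  rw [Fintype.card_fin, ← mul_pow, Real.mul_self_sqrt (by positivity)]

lemma gauss_eLpNorm_le {d : ℕ} (β : ℝ) (hβ : 0 < β) (r : ENNReal) (hr : 1 ≤ r) :
    eLpNorm (fun z : (Fin d → ℝ) × (Fin d → ℝ) => Real.exp (-β * nsq z)) r volume
      ≤ ENNReal.ofReal ((π/β) ^ ((d:ℝ)/r.toReal)) := by
  have hnn : ∀ z : (Fin d → ℝ) × (Fin d → ℝ), 0 ≤ nsq z := by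
    intro z; unfold nsq; positivity
  rcases eq_or_ne r ⊤ with hrt | hrt
  · rw [hrt]
    simp only [ENNReal.toReal_top, div_zero, Real.rpow_zero, ENNReal.ofReal_one]
    rw [eLpNorm_exponent_top]
    refine (eLpNormEssSup_le_of_ae_bound (C := 1) (ae_of_all _ fun z => ?_)).trans (by simp)
    rw [Real.norm_eq_abs, abs_of_pos (Real.exp_pos _)]
    exact Real.exp_le_one_iff.mpr (by nlinarith [hnn z])
  · have hr0 : r ≠ 0 := by intro h; rw [h] at hr; simp at hr
    have hrt1 : 1 ≤ r.toReal := by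
      rw [← ENNReal.toReal_one]
      exact ENNReal.toReal_mono hrt hr
    have hrt0 : 0 < r.toReal := by linarith
    rw [MeasureTheory.eLpNorm_eq_lintegral_rpow_enorm_toReal hr0 hrt]
    have key : ∀ z : (Fin d → ℝ) × (Fin d → ℝ),
        (‖Real.exp (-β * nsq z)‖ₑ ^ r.toReal)
          ≤ ENNReal.ofReal (Real.exp (-β * nsq z)) := by
      intro z
      rw [Real.enorm_eq_ofReal (Real.exp_pos _).le,
        ENNReal.ofReal_rpow_of_pos (Real.exp_pos _), ← Real.exp_mul]
      apply ENNReal.ofReal_le_ofReal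
      apply Real.exp_le_exp.mpr
      nlinarith [mul_nonneg (mul_nonneg hβ.le (hnn z)) (sub_nonneg.mpr hrt1)]
    calc (∫⁻ z : (Fin d → ℝ) × (Fin d → ℝ), ‖Real.exp (-β * nsq z)‖ₑ ^ r.toReal)
          ^ (1 / r.toReal)
        ≤ (∫⁻ z : (Fin d → ℝ) × (Fin d → ℝ), ENNReal.ofReal (Real.exp (-β * nsq z)))
          ^ (1 / r.toReal) := by
          exact ENNReal.rpow_le_rpow (lintegral_mono key) (by positivity)
      _ = (ENNReal.ofReal ((π/β)^d)) ^ (1 / r.toReal) := by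
          rw [← MeasureTheory.ofReal_integral_eq_lintegral_ofReal (gauss_integrable β hβ)
            (ae_of_all _ fun z => (Real.exp_pos _).le), gauss_integral β hβ]
      _ = ENNReal.ofReal ((π/β) ^ ((d:ℝ)/r.toReal)) := by
          rw [← ENNReal.ofReal_rpow_of_pos (show (0:ℝ) < π/β by positivity),
            ← Real.rpow_natCast (π/β) d,
            ← ENNReal.ofReal_rpow_of_pos (show (0:ℝ) < π/β by positivity),
            ← ENNReal.rpow_mul, mul_one_div]

lemma final_ineq (d : ℕ) (t : ℝ) (ht : 0 < t) (e1 e2 : ℝ)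
    (he1 : 0 ≤ e1) (he1d : e1 ≤ d) (he2 : 0 ≤ e2) (he2d : e2 ≤ d) :
    ((16*π*Real.sinh t)^d)⁻¹ * (((1/4 * (Real.cosh t/Real.sinh t) + 1))^d)⁻¹
        * (π * (1/4 * (Real.cosh t/Real.sinh t) + 1)) ^ e1
        * (π * (1/4 * (Real.cosh t/Real.sinh t) + 1) / (1/4 * (Real.cosh t/Real.sinh t))) ^ e2
      ≤ π^d * Real.exp (-t*d) * (1 + Real.cosh t/Real.sinh t) ^ e1
        * (1 + Real.tanh t) ^ e2 := by
  have hs : 0 < Real.sinh t := Real.sinh_pos_iff.mpr ht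
  have hc : 0 < Real.cosh t := Real.cosh_pos t
  set A := 1/4 * (Real.cosh t/Real.sinh t) with hA
  have hA0 : 0 < A := by positivity
  have hB0 : 0 < A + 1 := by positivity
  have htanh : Real.tanh t = Real.sinh t / Real.cosh t := Real.tanh_eq_sinh_div_cosh t
  have htanh0 : 0 ≤ Real.tanh t := by rw [htanh]; positivity
  -- bound 1
  have h1 : ((16*π*Real.sinh t)^d)⁻¹ * ((A+1)^d)⁻¹ ≤ ((4*π)^d)⁻¹ * Real.exp (-t*d) := by
    rw [← mul_inv, ← mul_pow]
    have e16 : 16*π*Real.sinh t * (A+1) = 4*π*(Real.cosh t + 4*Real.sinh t) := by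
      rw [hA]; field_simp; ring
    have hle : 4*π*Real.exp t ≤ 16*π*Real.sinh t * (A+1) := by
      rw [e16]
      have : Real.exp t ≤ Real.cosh t + 4*Real.sinh t := by
        have := Real.cosh_add_sinh t
        nlinarith
      nlinarith [Real.pi_pos]
    have hpos : (0:ℝ) < 4*π*Real.exp t := by positivity
    calc ((16*π*Real.sinh t * (A+1))^d)⁻¹ ≤ ((4*π*Real.exp t)^d)⁻¹ := by
          gcongr ((?_)^d)⁻¹
      _ = ((4*π)^d)⁻¹ * Real.exp (-t*d) := by
          rw [mul_pow, ← Real.exp_nat_mul, mul_inv, ← Real.exp_neg]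
          congr 2
          ring
  -- bound 2
  have h2 : (π * (A+1)) ^ e1 ≤ π^d * (1 + Real.cosh t/Real.sinh t) ^ e1 := by
    have step1 : (π * (A+1)) ^ e1 ≤ (π * (1 + Real.cosh t/Real.sinh t)) ^ e1 := by
      apply Real.rpow_le_rpow (by positivity) _ he1
      have : A + 1 ≤ 1 + Real.cosh t/Real.sinh t := by
        rw [hA]; nlinarith [div_pos hc hs]
      nlinarith [Real.pi_pos]
    refine step1.trans ?_
    rw [Real.mul_rpow (by positivity) (by positivity)]
    gcongr
    calc π ^ e1 ≤ π ^ (d:ℝ) :=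
          Real.rpow_le_rpow_of_exponent_le (by nlinarith [Real.pi_gt_three]) he1d
      _ = π ^ d := Real.rpow_natCast π d
  -- bound 3
  have h3 : (π * (A+1) / A) ^ e2 ≤ (4*π)^d * (1 + Real.tanh t) ^ e2 := by
    have key : π * (A+1) / A = π * (1 + 4 * Real.tanh t) := by
      rw [hA, htanh]
      field_simp
    have step1 : (π * (A+1) / A) ^ e2 ≤ (4*π * (1 + Real.tanh t)) ^ e2 := by
      apply Real.rpow_le_rpow (by rw [key]; positivity) _ he2
      rw [key]
      nlinarith [Real.pi_pos]
    refine step1.trans ?_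
    rw [Real.mul_rpow (by positivity) (by positivity)]
    gcongr
    calc (4*π) ^ e2 ≤ (4*π) ^ (d:ℝ) :=
          Real.rpow_le_rpow_of_exponent_le (by nlinarith [Real.pi_gt_three]) he2d
      _ = (4*π) ^ d := Real.rpow_natCast _ d
  calc ((16*π*Real.sinh t)^d)⁻¹ * ((A+1)^d)⁻¹ * (π * (A+1)) ^ e1 * (π * (A+1) / A) ^ e2
      ≤ (((4*π)^d)⁻¹ * Real.exp (-t*d)) * (π^d * (1 + Real.cosh t/Real.sinh t) ^ e1)
        * ((4*π)^d * (1 + Real.tanh t) ^ e2) := by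
        have p1 : (0:ℝ) ≤ (π * (A+1)) ^ e1 := by positivity
        have p2 : (0:ℝ) ≤ (π * (A+1) / A) ^ e2 := by positivity
        have q1 : (0:ℝ) ≤ ((16*π*Real.sinh t)^d)⁻¹ * ((A+1)^d)⁻¹ := by positivity
        calc ((16*π*Real.sinh t)^d)⁻¹ * ((A+1)^d)⁻¹ * (π * (A+1)) ^ e1 * (π * (A+1) / A) ^ e2
            = (((16*π*Real.sinh t)^d)⁻¹ * ((A+1)^d)⁻¹) * ((π * (A+1)) ^ e1 * (π * (A+1) / A) ^ e2) := by ring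
          _ ≤ (((4*π)^d)⁻¹ * Real.exp (-t*d))
              * ((π^d * (1 + Real.cosh t/Real.sinh t) ^ e1) * ((4*π)^d * (1 + Real.tanh t) ^ e2)) := by
              apply mul_le_mul h1 (mul_le_mul h2 h3 p2 (by positivity)) (by positivity) (by positivity)
          _ = (((4*π)^d)⁻¹ * Real.exp (-t*d)) * (π^d * (1 + Real.cosh t/Real.sinh t) ^ e1)
              * ((4*π)^d * (1 + Real.tanh t) ^ e2) := by ring
    _ = π^d * Real.exp (-t*d) * (1 + Real.cosh t/Real.sinh t) ^ e1 * (1 + Real.tanh t) ^ e2 := by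
        have : ((4*π)^d)⁻¹ * (4*π)^d = 1 := by
          apply inv_mul_cancel₀; positivity
        field_simp


/-- Wiener amalgam bound for the twisted heat propagator:
`‖p_t‖_{W^{p,q}} ≤ C e^{-td} (1+coth t)^{d/p} (1+tanh t)^{d/q}` with `C = C(d,p,q)`. -/
theorem twistedHeatProp_amalgam_bound {d : ℕ} (hd : 1 ≤ d)
    (p q : ENNReal) (hp : 1 ≤ p) (hq : 1 ≤ q) :
    ∃ C : ℝ, 0 < C ∧ ∀ t : ℝ, 0 < t →
      MeasureTheory.eLpNorm
          (fun z : (Fin d → ℝ) × (Fin d → ℝ) =>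
            (MeasureTheory.eLpNorm
                (fun ζ : (Fin d → ℝ) × (Fin d → ℝ) =>
                  sympGabor (fun w => ((Real.exp (-nsq w) : ℝ) : ℂ))
                    (twistedHeatProp d t) z ζ)
                p MeasureTheory.volume).toReal)
          q MeasureTheory.volume ≤
        ENNReal.ofReal
          (C * Real.exp (-t * d) *
            (1 + Real.cosh t / Real.sinh t) ^ ((d : ℝ) / p.toReal) *
            (1 + Real.tanh t) ^ ((d : ℝ) / q.toReal)) := by
  classical
  refine ⟨π ^ d, by positivity, fun t ht => ?_⟩
  have hs : 0 < Real.sinh t := Real.sinh_pos_iff.mpr ht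
  have hc : 0 < Real.cosh t := Real.cosh_pos t
  set A := 1/4 * (Real.cosh t / Real.sinh t) with hA
  have hA0 : 0 < A := by positivity
  have hB0 : (0:ℝ) < A + 1 := by positivity
  set c₀ := ((16 * π * Real.sinh t)^d)⁻¹ with hc₀
  have hc₀0 : 0 < c₀ := by positivity
  have hfeq : twistedHeatProp d t = fun w : (Fin d → ℝ) × (Fin d → ℝ) =>
      ((c₀ * Real.exp (-A * nsq w) : ℝ) : ℂ) := by
    funext w
    unfold twistedHeatProp
    rw [show -(1/4) * (Real.cosh t / Real.sinh t) * nsq w = -A * nsq w by rw [hA]; ring]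
  have habs : ∀ z ζ : (Fin d → ℝ) × (Fin d → ℝ),
      ‖(sympGabor (fun w => ((Real.exp (-nsq w) : ℝ) : ℂ)) (twistedHeatProp d t) z ζ)‖
        = (c₀ * ((A+1)^d)⁻¹ * Real.exp (-(A/(A+1)) * nsq z)) * Real.exp (-(1/(A+1)) * nsq ζ) := by
    intro z ζ
    rw [hfeq, abs_gabor A c₀ hA0 hc₀0.le z ζ]
    ring
  set Np := eLpNorm (fun ζ : (Fin d → ℝ) × (Fin d → ℝ) =>
    Real.exp (-(1/(A+1)) * nsq ζ)) p volume with hNp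
  set Nq := eLpNorm (fun z : (Fin d → ℝ) × (Fin d → ℝ) =>
    Real.exp (-(A/(A+1)) * nsq z)) q volume with hNq
  have hNple : Np ≤ ENNReal.ofReal ((π/(1/(A+1))) ^ ((d:ℝ)/p.toReal)) :=
    gauss_eLpNorm_le _ (by positivity) p hp
  have hNqle : Nq ≤ ENNReal.ofReal ((π/(A/(A+1))) ^ ((d:ℝ)/q.toReal)) :=
    gauss_eLpNorm_le _ (by positivity) q hq
  have hNptR : Np.toReal ≤ (π*(A+1)) ^ ((d:ℝ)/p.toReal) := by
    have := ENNReal.toReal_mono ENNReal.ofReal_ne_top hNple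
    rw [ENNReal.toReal_ofReal (by positivity)] at this
    rwa [show π / (1/(A+1)) = π * (A+1) by field_simp] at this
  have hNptR0 : 0 ≤ Np.toReal := ENNReal.toReal_nonneg
  have hinner : ∀ z : (Fin d → ℝ) × (Fin d → ℝ),
      eLpNorm (fun ζ : (Fin d → ℝ) × (Fin d → ℝ) =>
          sympGabor (fun w => ((Real.exp (-nsq w) : ℝ) : ℂ)) (twistedHeatProp d t) z ζ) p volume
        = ENNReal.ofReal (c₀ * ((A+1)^d)⁻¹ * Real.exp (-(A/(A+1)) * nsq z)) * Np := by
    intro z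
    have heq : eLpNorm (fun ζ : (Fin d → ℝ) × (Fin d → ℝ) =>
          sympGabor (fun w => ((Real.exp (-nsq w) : ℝ) : ℂ)) (twistedHeatProp d t) z ζ) p volume
        = eLpNorm ((c₀ * ((A+1)^d)⁻¹ * Real.exp (-(A/(A+1)) * nsq z)) •
            (fun ζ : (Fin d → ℝ) × (Fin d → ℝ) => Real.exp (-(1/(A+1)) * nsq ζ))) p volume := by
      apply eLpNorm_congr_norm_ae (ae_of_all _ fun ζ => ?_)
      rw [habs z ζ, Pi.smul_apply, smul_eq_mul, Real.norm_eq_abs,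
        abs_of_nonneg (by positivity)]
    rw [heq, eLpNorm_const_smul, Real.enorm_eq_ofReal (by positivity)]
  have houter : (fun z : (Fin d → ℝ) × (Fin d → ℝ) =>
        (eLpNorm (fun ζ : (Fin d → ℝ) × (Fin d → ℝ) =>
          sympGabor (fun w => ((Real.exp (-nsq w) : ℝ) : ℂ)) (twistedHeatProp d t) z ζ)
          p volume).toReal)
      = (c₀ * ((A+1)^d)⁻¹ * Np.toReal) •
          (fun z : (Fin d → ℝ) × (Fin d → ℝ) => Real.exp (-(A/(A+1)) * nsq z)) := by
    funext z
    rw [hinner z, ENNReal.toReal_mul, ENNReal.toReal_ofReal (by positivity),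
      Pi.smul_apply, smul_eq_mul]
    ring
  rw [houter, eLpNorm_const_smul, Real.enorm_eq_ofReal (by positivity), ← hNq]
  -- exponent bounds
  have hpr : 0 ≤ (d:ℝ)/p.toReal ∧ (d:ℝ)/p.toReal ≤ d := by
    rcases eq_or_ne p ⊤ with h | h
    · simp [h]
    · have h1 : 1 ≤ p.toReal := by
        rw [← ENNReal.toReal_one]; exact ENNReal.toReal_mono h hp
      constructor
      · positivity
      · exact div_le_self (by positivity) h1
  have hqr : 0 ≤ (d:ℝ)/q.toReal ∧ (d:ℝ)/q.toReal ≤ d := by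
    rcases eq_or_ne q ⊤ with h | h
    · simp [h]
    · have h1 : 1 ≤ q.toReal := by
        rw [← ENNReal.toReal_one]; exact ENNReal.toReal_mono h hq
      constructor
      · positivity
      · exact div_le_self (by positivity) h1
  calc ENNReal.ofReal (c₀ * ((A+1)^d)⁻¹ * Np.toReal) * Nq
      ≤ ENNReal.ofReal (c₀ * ((A+1)^d)⁻¹ * Np.toReal)
        * ENNReal.ofReal ((π*(A+1)/A) ^ ((d:ℝ)/q.toReal)) := by
        apply mul_le_mul_right
        rwa [div_div_eq_mul_div] at hNqle
    _ = ENNReal.ofReal (c₀ * ((A+1)^d)⁻¹ * Np.toReal * (π*(A+1)/A) ^ ((d:ℝ)/q.toReal)) :=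
        (ENNReal.ofReal_mul (by positivity)).symm
    _ ≤ ENNReal.ofReal (c₀ * ((A+1)^d)⁻¹ * (π*(A+1)) ^ ((d:ℝ)/p.toReal)
          * (π*(A+1)/A) ^ ((d:ℝ)/q.toReal)) := by
        apply ENNReal.ofReal_le_ofReal
        have hx : (0:ℝ) ≤ (π*(A+1)/A) ^ ((d:ℝ)/q.toReal) := by positivity
        have hy : (0:ℝ) ≤ c₀ * ((A+1)^d)⁻¹ := by positivity
        calc c₀ * ((A+1)^d)⁻¹ * Np.toReal * (π*(A+1)/A) ^ ((d:ℝ)/q.toReal)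
            = (c₀ * ((A+1)^d)⁻¹) * Np.toReal * (π*(A+1)/A) ^ ((d:ℝ)/q.toReal) := by ring
          _ ≤ (c₀ * ((A+1)^d)⁻¹) * ((π*(A+1)) ^ ((d:ℝ)/p.toReal))
              * (π*(A+1)/A) ^ ((d:ℝ)/q.toReal) := by
              apply mul_le_mul_of_nonneg_right _ hx
              exact mul_le_mul_of_nonneg_left hNptR hy
          _ = c₀ * ((A+1)^d)⁻¹ * (π*(A+1)) ^ ((d:ℝ)/p.toReal)
              * (π*(A+1)/A) ^ ((d:ℝ)/q.toReal) := by ring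
    _ ≤ ENNReal.ofReal (π ^ d * Real.exp (-t * d)
          * (1 + Real.cosh t / Real.sinh t) ^ ((d : ℝ) / p.toReal)
          * (1 + Real.tanh t) ^ ((d : ℝ) / q.toReal)) := by
        apply ENNReal.ofReal_le_ofReal
        have := final_ineq d t ht ((d:ℝ)/p.toReal) ((d:ℝ)/q.toReal)
          hpr.1 hpr.2 hqr.1 hqr.2
        rw [hA, hc₀]
        convert this using 2

end
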